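/- arXiv:2409.19175 — 2 statements merged into one kernel-verified Lean document; each statement's English description precedes it below -/
import Mathlib

section
/- Fix σ > 0 and s ∈ ℝ. Let ξ : ℝ → ℂ be a characteristic function of a centred distribution with variance σ², so that ξ(t) = 1 - σ²t²/2 + o(t²) as t → 0. Define ψ_N(s) = ξ(s/√N) / (N - 1 - (N-2) ξ(s/√N)). Then lim_{N→∞} ψ_N(s) = 2/(2 + σ²s²). -/
/-!
Put `t_N = s / √N`, so that `N t_N² = s²`. The second-order expansion of `ξ` gives
`N (1 - ξ(t_N)) → σ² s² / 2`; in particular `ξ(t_N) → 1`. Since the denominator equals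
`N (1 - ξ(t_N)) + 2 ξ(t_N) - 1`, it tends to `σ² s² / 2 + 1`, and the quotient to `2 / (2 + σ² s²)`.
-/

open Filter Asymptotics Topology

theorem tendsto_div_sqrt_natCast_nhds_zero (s : ℝ) :
    Tendsto (fun N : ℕ => s / Real.sqrt N) atTop (𝓝 0) :=
  tendsto_const_nhds.div_atTop (Real.tendsto_sqrt_atTop.comp tendsto_natCast_atTop_atTop)

theorem div_sqrt_natCast_sq_isBigO_inv (s : ℝ) :
    (fun N : ℕ => (s / Real.sqrt N) ^ 2) =O[atTop] fun N : ℕ => ((N : ℝ))⁻¹ := by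
  have hsq (N : ℕ) : (s / Real.sqrt N) ^ 2 = s ^ 2 * ((N : ℝ))⁻¹ := by
    rw [div_pow, Real.sq_sqrt N.cast_nonneg, div_eq_mul_inv]
  simpa only [hsq] using isBigO_const_mul_self (s ^ 2) _ atTop

theorem tendsto_natCast_smul_comp_div_sqrt_of_isLittleO {E : Type*} [NormedAddCommGroup E]
    [NormedSpace ℝ E] {f : ℝ → E} (hf : f =o[𝓝 0] fun t => t ^ 2) (s : ℝ) :
    Tendsto (fun N : ℕ => (N : ℝ) • f (s / Real.sqrt N)) atTop (𝓝 0) := by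
  have hO : (fun N : ℕ => f (s / Real.sqrt N)) =o[atTop] fun N : ℕ => ((N : ℝ))⁻¹ :=
    (hf.comp_tendsto (tendsto_div_sqrt_natCast_nhds_zero s)).trans_isBigO
      (div_sqrt_natCast_sq_isBigO_inv s)
  have hsmul := (isBigO_refl (fun N : ℕ => (N : ℝ)) atTop).smul_isLittleO hO
  refine (isLittleO_one_iff ℝ).mp (hsmul.congr' EventuallyEq.rfl ?_)
  filter_upwards [eventually_ne_atTop 0] with N hN
  simp [hN]

theorem tendsto_div_natCast_sub_one_sub_mul {𝕜 : Type*} [RCLike 𝕜] {z : ℕ → 𝕜} {L : 𝕜}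
    (hL : L + 1 ≠ 0) (hz : Tendsto (fun N : ℕ => (N : 𝕜) * (1 - z N)) atTop (𝓝 L)) :
    Tendsto (fun N : ℕ => z N / ((N : 𝕜) - 1 - ((N : 𝕜) - 2) * z N)) atTop (𝓝 (1 / (L + 1))) := by
  have hz_one : Tendsto z atTop (𝓝 1) := by
    have h := tendsto_const_nhds (x := (1 : 𝕜)).sub (tendsto_inv_atTop_nhds_zero_nat.mul hz)
    rw [zero_mul, sub_zero] at h
    refine h.congr' ?_
    filter_upwards [eventually_ne_atTop 0] with N hN
    field_simp
    ring
  have hden : Tendsto (fun N : ℕ => (N : 𝕜) - 1 - ((N : 𝕜) - 2) * z N) atTop (𝓝 (L + 1)) := by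
    have h := hz.add ((hz_one.const_mul 2).sub (tendsto_const_nhds (x := (1 : 𝕜))))
    rw [show L + (2 * 1 - 1) = L + 1 by ring] at h
    exact h.congr fun N => by ring
  exact hz_one.div hden hL

theorem tendsto_natCast_mul_one_sub_of_isLittleO {ξ : ℝ → ℂ} {c : ℂ}
    (hξ : (fun t : ℝ => ξ t - (1 - c * (t : ℂ) ^ 2 / 2)) =o[𝓝 0] fun t : ℝ => t ^ 2) (s : ℝ) :
    Tendsto (fun N : ℕ => (N : ℂ) * (1 - ξ (s / Real.sqrt N))) atTop (𝓝 (c * (s : ℂ) ^ 2 / 2)) := by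
  have h := (tendsto_const_nhds (x := c * (s : ℂ) ^ 2 / 2)).sub
    (tendsto_natCast_smul_comp_div_sqrt_of_isLittleO hξ s)
  rw [sub_zero] at h
  refine h.congr' ?_
  filter_upwards [eventually_ne_atTop 0] with N hN
  have hsq : (N : ℝ) * (s / Real.sqrt N) ^ 2 = s ^ 2 := by
    rw [div_pow, Real.sq_sqrt N.cast_nonneg, mul_div_cancel₀ _ (Nat.cast_ne_zero.mpr hN)]
  have hsqC : (N : ℂ) * ((s / Real.sqrt N : ℝ) : ℂ) ^ 2 = (s : ℂ) ^ 2 := by exact_mod_cast hsq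
  rw [Complex.real_smul, Complex.ofReal_natCast]
  linear_combination -c / 2 * hsqC

theorem stmt_4_general (σ : ℝ) (s : ℝ) (ξ : ℝ → ℂ)
    (hξ : (fun t : ℝ => ξ t - (1 - (σ : ℂ) ^ 2 * (t : ℂ) ^ 2 / 2)) =o[nhds 0]
      fun t : ℝ => t ^ 2) :
    Tendsto
      (fun N : ℕ =>
        ξ (s / Real.sqrt N) /
          ((N : ℂ) - 1 - ((N : ℂ) - 2) * ξ (s / Real.sqrt N)))
      atTop (nhds (2 / (2 + (σ : ℂ) ^ 2 * (s : ℂ) ^ 2))) := by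
  have hpos : 0 < (σ ^ 2 * s ^ 2 / 2 + 1 : ℝ) := by positivity
  have hL : (σ : ℂ) ^ 2 * (s : ℂ) ^ 2 / 2 + 1 ≠ 0 := by exact_mod_cast hpos.ne'
  convert tendsto_div_natCast_sub_one_sub_mul hL
    (tendsto_natCast_mul_one_sub_of_isLittleO hξ s) using 2
  field_simp
  ring

theorem stmt_4 (σ : ℝ) (hσ : 0 < σ) (s : ℝ) (ξ : ℝ → ℂ)
    (hξ : (fun t : ℝ => ξ t - (1 - (σ : ℂ) ^ 2 * (t : ℂ) ^ 2 / 2)) =o[nhds 0]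
      fun t : ℝ => t ^ 2) :
    Tendsto
      (fun N : ℕ =>
        ξ (s / Real.sqrt N) /
          ((N : ℂ) - 1 - ((N : ℂ) - 2) * ξ (s / Real.sqrt N)))
      atTop (nhds (2 / (2 + (σ : ℂ) ^ 2 * (s : ℂ) ^ 2))) :=
  stmt_4_general σ s ξ hξ
end

section
/- Let μ_n be a sequence of probability measures on ℝ satisfying the recursion μ_{n+1} = α (μ_n * λ) + β λ + γ μ_n, where λ is a fixed probability measure on ℝ, α, β, γ ≥ 0, α + β + γ = 1, β > 0. Then μ_n converges weakly to a probability measure μ satisfying μ = α (μ * λ) + β λ + γ μ, and this μ is unique. -/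
/-!
Write the recursion as `μ (n + 1) = T (μ n) + ρ` with `ρ = β λ` and `T μ = α (μ ∗ λ) + γ μ`, a
countably additive linear operator on measures that multiplies total mass by `r = α + γ < 1`.
Unrolling gives `μ n = Tⁿ (μ 0) + ∑_{k < n} Tᵏ ρ`. The first term has mass `rⁿ → 0` and the
partial sums increase to the Neumann series `∑ₖ Tᵏ ρ`, so `μ n` converges to it even in total
variation. The Neumann series is a fixed point of `ν ↦ T ν + ρ`, and any finite fixed point
satisfies the same unrolled identity with a vanishing first term, hence equals it.
-/

open MeasureTheory Filter Set
open scoped ENNReal Topology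

theorem Module.End.eq_pow_apply_add_sum_of_eq_apply_add {R A : Type*} [Semiring R]
    [AddCommMonoid A] [Module R A] (T : Module.End R A) {x : ℕ → A} {y : A}
    (h : ∀ n, x (n + 1) = T (x n) + y) (n : ℕ) :
    x n = (T ^ n) (x 0) + ∑ k ∈ Finset.range n, (T ^ k) y := by
  induction n with
  | zero => simp
  | succ n ih =>
    rw [h, ih, map_add, map_sum, Finset.sum_range_succ', pow_succ', mul_apply, pow_zero,
      one_apply, add_assoc]
    simp only [pow_succ', mul_apply]

namespace MeasureTheory

theorem tendsto_integral_zero_of_tendsto_measure_univ {X E ι : Type*} [MeasurableSpace X]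
    [NormedAddCommGroup E] [NormedSpace ℝ E] {l : Filter ι} {μ : ι → Measure X}
    [∀ i, IsFiniteMeasure (μ i)] (hμ : Tendsto (fun i ↦ μ i univ) l (𝓝 0)) {f : X → E} {C : ℝ}
    (hC : ∀ x, ‖f x‖ ≤ C) : Tendsto (fun i ↦ ∫ x, f x ∂μ i) l (𝓝 0) := by
  refine squeeze_zero_norm (fun i ↦ norm_integral_le_of_norm_le_const (ae_of_all _ hC)) ?_
  simpa [measureReal_def] using
    ((ENNReal.tendsto_toReal ENNReal.zero_ne_top).comp hμ).const_mul C

namespace Measure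

section NeumannSeries

variable {X : Type*} [MeasurableSpace X] {T : Module.End ℝ≥0∞ (Measure X)} {r : ℝ≥0∞}
  {ν ρ : Measure X}

noncomputable def neumannSeries (T : Module.End ℝ≥0∞ (Measure X)) (ρ : Measure X) :
    Measure X :=
  Measure.sum fun k ↦ (T ^ k) ρ

theorem pow_apply_univ (hT : ∀ ν, T ν univ = r * ν univ) (n : ℕ) (ν : Measure X) :
    (T ^ n) ν univ = r ^ n * ν univ := by
  induction n with
  | zero => simp
  | succ n ih => rw [pow_succ', Module.End.mul_apply, hT, ih, pow_succ', mul_assoc]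

theorem tendsto_pow_apply_univ (hT : ∀ ν, T ν univ = r * ν univ) (hr : r < 1)
    (hν : ν univ ≠ ∞) : Tendsto (fun n ↦ (T ^ n) ν univ) atTop (𝓝 0) := by
  simpa [pow_apply_univ hT] using
    ENNReal.Tendsto.mul_const (ENNReal.tendsto_pow_atTop_nhds_zero_of_lt_one hr) (.inr hν)

theorem isFiniteMeasure_pow_apply (hT : ∀ ν, T ν univ = r * ν univ) (hr : r ≠ ∞)
    [IsFiniteMeasure ν] (n : ℕ) : IsFiniteMeasure ((T ^ n) ν) := by
  refine ⟨?_⟩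
  rw [pow_apply_univ hT]
  exact ENNReal.mul_lt_top (ENNReal.pow_lt_top hr.lt_top) (measure_lt_top ν univ)

theorem neumannSeries_apply_univ (hT : ∀ ν, T ν univ = r * ν univ) (ρ : Measure X) :
    neumannSeries T ρ univ = (1 - r)⁻¹ * ρ univ := by
  simp only [neumannSeries, sum_apply _ MeasurableSet.univ, pow_apply_univ hT,
    ENNReal.tsum_mul_right, ENNReal.tsum_geometric]

theorem isFiniteMeasure_neumannSeries (hT : ∀ ν, T ν univ = r * ν univ) (hr : r < 1)
    [IsFiniteMeasure ρ] : IsFiniteMeasure (neumannSeries T ρ) := by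
  refine ⟨?_⟩
  rw [neumannSeries_apply_univ hT]
  exact ENNReal.mul_lt_top (ENNReal.inv_lt_top.2 (tsub_pos_of_lt hr)) (measure_lt_top ρ univ)

theorem neumannSeries_eq_apply_add
    (hsum : ∀ m : ℕ → Measure X, T (Measure.sum m) = Measure.sum fun k ↦ T (m k)) :
    neumannSeries T ρ = T (neumannSeries T ρ) + ρ := by
  ext s hs
  simp only [neumannSeries, hsum, coe_add, Pi.add_apply, sum_apply _ hs,
    tsum_eq_zero_add' ENNReal.summable (f := fun k ↦ (T ^ k) ρ s), pow_zero,
    Module.End.one_apply, pow_succ', Module.End.mul_apply]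
  rw [add_comm]

theorem eq_neumannSeries_of_eq_apply_add (hT : ∀ ν, T ν univ = r * ν univ) (hr : r < 1)
    (hν : ν univ ≠ ∞) (h : ν = T ν + ρ) : ν = neumannSeries T ρ := by
  have hsplit := T.eq_pow_apply_add_sum_of_eq_apply_add (x := fun _ ↦ ν) (fun _ ↦ h)
  ext s hs
  have hrem : Tendsto (fun n ↦ (T ^ n) ν s) atTop (𝓝 0) :=
    tendsto_of_tendsto_of_tendsto_of_le_of_le tendsto_const_nhds
      (tendsto_pow_apply_univ hT hr hν) (fun _ ↦ zero_le) (fun _ ↦ measure_mono (subset_univ s))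
  have hpartial := ENNReal.tendsto_nat_tsum fun k ↦ (T ^ k) ρ s
  rw [← sum_apply _ hs] at hpartial
  have hlim := hrem.add hpartial
  rw [zero_add] at hlim
  refine tendsto_nhds_unique tendsto_const_nhds (hlim.congr fun n ↦ ?_)
  simpa [Finset.sum_apply] using (congrArg (· s) (hsplit n)).symm

theorem tendsto_integral_neumannSeries {E : Type*} [NormedAddCommGroup E] [NormedSpace ℝ E]
    (hT : ∀ ν, T ν univ = r * ν univ) (hr : r < 1) {μ : ℕ → Measure X} [IsFiniteMeasure (μ 0)]
    [IsFiniteMeasure ρ] (hμ : ∀ n, μ (n + 1) = T (μ n) + ρ) {f : X → E}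
    (hf : StronglyMeasurable f) {C : ℝ} (hC : ∀ x, ‖f x‖ ≤ C) :
    Tendsto (fun n ↦ ∫ x, f x ∂μ n) atTop (𝓝 (∫ x, f x ∂neumannSeries T ρ)) := by
  have := isFiniteMeasure_neumannSeries hT hr (ρ := ρ)
  have := isFiniteMeasure_pow_apply hT hr.ne_top (ν := μ 0)
  have hint : Integrable f (neumannSeries T ρ) :=
    .of_bound hf.aestronglyMeasurable C (ae_of_all _ hC)
  have hterm (k : ℕ) : Integrable f ((T ^ k) ρ) := hint.mono_measure (le_sum _ k)
  have hsplit (n : ℕ) : ∫ x, f x ∂μ n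
      = ∫ x, f x ∂(T ^ n) (μ 0) + ∑ k ∈ Finset.range n, ∫ x, f x ∂(T ^ k) ρ := by
    rw [T.eq_pow_apply_add_sum_of_eq_apply_add hμ n,
      integral_add_measure (.of_bound hf.aestronglyMeasurable C (ae_of_all _ hC))
        (integrable_finsetSum_measure.2 fun k _ ↦ hterm k),
      integral_finsetSum_measure fun k _ ↦ hterm k]
  have hrem := tendsto_integral_zero_of_tendsto_measure_univ
    (tendsto_pow_apply_univ hT hr (measure_ne_top (μ 0) univ)) hC
  have hlim := hrem.add (hasSum_integral_measure hint).tendsto_sum_nat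
  rw [zero_add] at hlim
  exact hlim.congr fun n ↦ (hsplit n).symm

end NeumannSeries

section Convolution

variable {M : Type*} [AddMonoid M] [MeasurableSpace M] [MeasurableAdd₂ M]

theorem sum_conv {ι : Type*} (m : ι → Measure M) (ν : Measure M) [SFinite ν] :
    (Measure.sum m) ∗ ν = Measure.sum fun i ↦ m i ∗ ν := by
  rw [conv, prod_sum_left, map_sum (by fun_prop)]
  rfl

theorem conv_apply_univ (μ ν : Measure M) [SFinite ν] : (μ ∗ ν) univ = μ univ * ν univ := by
  rw [conv, map_apply (by fun_prop) .univ, preimage_univ, ← univ_prod_univ, prod_prod]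

noncomputable def convRight (ν : Measure M) [SFinite ν] : Module.End ℝ≥0∞ (Measure M) where
  toFun μ := μ ∗ ν
  map_add' μ μ' := by
    ext s hs
    simp only [conv, map_apply measurable_add hs, prod_apply (measurable_add hs),
      lintegral_add_measure, coe_add, Pi.add_apply]
  map_smul' c μ := conv_smul_left μ ν c

noncomputable def convMix (ν : Measure M) [SFinite ν] (a c : ℝ≥0∞) :
    Module.End ℝ≥0∞ (Measure M) :=
  a • convRight ν + c • 1

variable {ν : Measure M} [SFinite ν] {a c : ℝ≥0∞}

theorem convMix_apply (μ : Measure M) : convMix ν a c μ = a • (μ ∗ ν) + c • μ := rfl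

theorem convMix_apply_univ [IsProbabilityMeasure ν] (μ : Measure M) :
    convMix ν a c μ univ = (a + c) * μ univ := by
  simp [convMix_apply, conv_apply_univ, add_mul]

theorem convMix_sum {ι : Type*} (m : ι → Measure M) :
    convMix ν a c (Measure.sum m) = Measure.sum fun i ↦ convMix ν a c (m i) := by
  ext s hs
  simp [convMix_apply, sum_conv, sum_apply _ hs, ENNReal.tsum_mul_left, ENNReal.tsum_add]

end Convolution

end Measure

end MeasureTheory

theorem stmt_8 (lam : Measure ℝ) [IsProbabilityMeasure lam]
    (α β γ : ℝ) (hα : 0 ≤ α) (hβ : 0 < β) (hγ : 0 ≤ γ) (hsum : α + β + γ = 1)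
    (μ : ℕ → Measure ℝ) (hprob : ∀ n, IsProbabilityMeasure (μ n))
    (hrec : ∀ n, μ (n + 1) =
      ENNReal.ofReal α • ((μ n).conv lam) + ENNReal.ofReal β • lam
        + ENNReal.ofReal γ • μ n) :
    ∃ μlim : Measure ℝ, IsProbabilityMeasure μlim
      ∧ μlim = ENNReal.ofReal α • (μlim.conv lam) + ENNReal.ofReal β • lam
          + ENNReal.ofReal γ • μlim
      ∧ (∀ f : BoundedContinuousFunction ℝ ℝ,
          Tendsto (fun n => ∫ x, f x ∂(μ n)) atTop (nhds (∫ x, f x ∂μlim)))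
      ∧ (∀ ν : Measure ℝ, IsProbabilityMeasure ν →
          ν = ENNReal.ofReal α • (ν.conv lam) + ENNReal.ofReal β • lam
            + ENNReal.ofReal γ • ν → ν = μlim) := by
  set T := lam.convMix (ENNReal.ofReal α) (ENNReal.ofReal γ)
  set ρ := ENNReal.ofReal β • lam
  have hT (ν : Measure ℝ) : T ν univ = ENNReal.ofReal (α + γ) * ν univ := by
    rw [Measure.convMix_apply_univ, ENNReal.ofReal_add hα hγ]
  have hr : ENNReal.ofReal (α + γ) < 1 := ENNReal.ofReal_lt_one.2 (by linarith)
  have hstep (ν : Measure ℝ) : ENNReal.ofReal α • (ν.conv lam) + ENNReal.ofReal β • lam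
      + ENNReal.ofReal γ • ν = T ν + ρ := by
    rw [Measure.convMix_apply, add_right_comm]
  have : IsFiniteMeasure ρ := ⟨by simp [ρ]⟩
  have := hprob 0
  have hmass : Measure.neumannSeries T ρ univ = 1 := by
    rw [Measure.neumannSeries_apply_univ hT, ← ENNReal.ofReal_one,
      ← ENNReal.ofReal_sub _ (by linarith), show 1 - (α + γ) = β by linarith]
    simp [ρ, ENNReal.inv_mul_cancel, hβ]
  refine ⟨Measure.neumannSeries T ρ, ⟨hmass⟩,
    (Measure.neumannSeries_eq_apply_add Measure.convMix_sum).trans (hstep _).symm,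
    fun f ↦ ?_, fun ν _ hν ↦ ?_⟩
  · exact Measure.tendsto_integral_neumannSeries hT hr (fun n ↦ (hrec n).trans (hstep _))
      f.continuous.stronglyMeasurable f.norm_coe_le_norm
  · exact Measure.eq_neumannSeries_of_eq_apply_add hT hr (measure_ne_top ν univ)
      (hν.trans (hstep ν))
end
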